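/- Let h ⊆ g be a Lie subalgebra and h° = {α ∈ g* : α(X) = 0 for all X ∈ h} its annihilator. Then h × h° is a Lie subalgebra of the Drinfel'd double D(g) = g × g* if and only if δ(X) ∈ h⊗g + g⊗h for all X ∈ h (the coisotropy condition on h). -/

import Mathlib

/-! Both sides are conditions on the annihilator `h°`. By right exactness of `⊗`,
`h ⊗ g + g ⊗ h` is the kernel of `g ⊗ g → (g/h) ⊗ (g/h)`, and the functionals `α ⊗ β` on the
free module `(g/h) ⊗ (g/h)` separate points; pulled back to `g`, these are exactly the `α ⊗ β`
with `α, β ∈ h°`. So `h` is coisotropic iff `[α, β]_*` vanishes on `h` for `α, β ∈ h°`, which is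
the `g*`-part of the closure of `h × h°`. For the `g`-part, `γ (a(α, X)) = [α, γ]_*(X)` vanishes
for all `γ ∈ h°`, and `h = (h°)°`. -/

open TensorProduct

section

open Module LinearMap

theorem Module.Basis.tensorProduct_repr_eq_lid_map_coord {R M N ι κ : Type*} [CommRing R]
    [AddCommGroup M] [Module R M] [AddCommGroup N] [Module R N]
    (b : Basis ι R M) (c : Basis κ R N) (u : M ⊗[R] N) (i : ι) (j : κ) :
    (b.tensorProduct c).repr u (i, j) = TensorProduct.lid R R (map (b.coord i) (c.coord j) u) := by
  induction u using TensorProduct.induction_on with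
  | zero => simp
  | tmul x y => simp [Basis.tensorProduct_repr_tmul_apply, mul_comm]
  | add x y hx hy => simp [hx, hy]

theorem TensorProduct.forall_lid_map_dual_eq_zero_iff {R M N : Type*} [CommRing R]
    [AddCommGroup M] [Module R M] [Free R M] [AddCommGroup N] [Module R N] [Free R N]
    (u : M ⊗[R] N) :
    (∀ (φ : Dual R M) (ψ : Dual R N), TensorProduct.lid R R (map φ ψ u) = 0) ↔ u = 0 := by
  refine ⟨fun hu => ?_, fun hu φ ψ => by simp [hu]⟩
  let b := Free.chooseBasis R M
  let c := Free.chooseBasis R N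
  apply (b.tensorProduct c).repr.injective
  ext ⟨i, j⟩
  simp [Basis.tensorProduct_repr_eq_lid_map_coord, hu]

theorem TensorProduct.mem_range_map_subtype_sup_iff {K V W : Type*} [Field K]
    [AddCommGroup V] [Module K V] [AddCommGroup W] [Module K W]
    (p : Submodule K V) (q : Submodule K W) (t : V ⊗[K] W) :
    t ∈ range (map p.subtype (id : W →ₗ[K] W)) ⊔ range (map (id : V →ₗ[K] V) q.subtype) ↔
      ∀ α ∈ p.dualAnnihilator, ∀ β ∈ q.dualAnnihilator, TensorProduct.lid K K (map α β t) = 0 := by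
  have hker : range (map p.subtype (id : W →ₗ[K] W)) ⊔ range (map (id : V →ₗ[K] V) q.subtype)
      = ker (map p.mkQ q.mkQ) := by
    rw [map_ker (exact_subtype_mkQ p) p.mkQ_surjective (exact_subtype_mkQ q) q.mkQ_surjective,
      sup_comm]
    rfl
  simp only [hker, mem_ker, ← Submodule.range_dualMap_mkQ_eq, mem_range, forall_exists_index,
    forall_apply_eq_imp_iff, dualMap_apply', map_comp, comp_apply]
  exact (forall_lid_map_dual_eq_zero_iff _).symm

end

theorem coisotropic_iff_subalgebra_of_double
    (g : Type*) [LieRing g] [LieAlgebra ℝ g]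
    (br : Module.Dual ℝ g →ₗ[ℝ] Module.Dual ℝ g →ₗ[ℝ] Module.Dual ℝ g)
    (δ : g →ₗ[ℝ] g ⊗[ℝ] g)
    (hδ : ∀ (X : g) (α β : Module.Dual ℝ g),
      TensorProduct.lid ℝ ℝ (TensorProduct.map α β (δ X)) = br α β X)
    (a : Module.Dual ℝ g →ₗ[ℝ] g →ₗ[ℝ] g)
    (ha : ∀ (α : Module.Dual ℝ g) (X : g) (β : Module.Dual ℝ g),
      β (a α X) = br α β X)
    (Dbr : g × Module.Dual ℝ g → g × Module.Dual ℝ g → g × Module.Dual ℝ g)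
    (hDbr : ∀ (X Y : g) (α β : Module.Dual ℝ g),
      Dbr (X, α) (Y, β) =
        (⁅X, Y⁆ + a β X - a α Y,
          br α β + α ∘ₗ (LieAlgebra.ad ℝ g Y : g →ₗ[ℝ] g)
            - β ∘ₗ (LieAlgebra.ad ℝ g X : g →ₗ[ℝ] g))) :
    ∀ h : LieSubalgebra ℝ g,
      -- `h × h°` is closed under the double bracket
      (∀ (X Y : g) (α β : Module.Dual ℝ g), X ∈ h → Y ∈ h →
        (∀ Z ∈ h, α Z = 0) → (∀ Z ∈ h, β Z = 0) →
        (Dbr (X, α) (Y, β)).1 ∈ h ∧ ∀ Z ∈ h, (Dbr (X, α) (Y, β)).2 Z = 0)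
      ↔
      -- coisotropy: `δ(X) ∈ h ⊗ g + g ⊗ h` for all `X ∈ h`
      (∀ X ∈ h, δ X ∈
        LinearMap.range (TensorProduct.map (h : Submodule ℝ g).subtype
          (LinearMap.id : g →ₗ[ℝ] g))
        ⊔ LinearMap.range (TensorProduct.map (LinearMap.id : g →ₗ[ℝ] g)
          (h : Submodule ℝ g).subtype)) := by
  intro h
  have mem_annihilator_iff (α : Module.Dual ℝ g) :
      α ∈ (h : Submodule ℝ g).dualAnnihilator ↔ ∀ Z ∈ h, α Z = 0 :=
    Submodule.mem_dualAnnihilator α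
  have coisotropic_iff (X : g) :
      δ X ∈ LinearMap.range (TensorProduct.map (h : Submodule ℝ g).subtype LinearMap.id)
        ⊔ LinearMap.range (TensorProduct.map LinearMap.id (h : Submodule ℝ g).subtype) ↔
      ∀ α ∈ (h : Submodule ℝ g).dualAnnihilator, ∀ β ∈ (h : Submodule ℝ g).dualAnnihilator,
        br α β X = 0 := by
    simp only [TensorProduct.mem_range_map_subtype_sup_iff, hδ]
  simp only [coisotropic_iff, ← mem_annihilator_iff]
  constructor
  · intro hclosed X hX α hα β hβ
    simpa [hDbr] using
      (mem_annihilator_iff _).1 (hclosed 0 0 α β h.zero_mem h.zero_mem hα hβ).2 X hX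
  · intro hcoiso X Y α β hX hY hα hβ
    have a_mem {α : Module.Dual ℝ g} {X : g} (hα : α ∈ (h : Submodule ℝ g).dualAnnihilator)
        (hX : X ∈ h) : a α X ∈ h :=
      (Subspace.forall_mem_dualAnnihilator_apply_eq_zero_iff _ _).1
        fun γ hγ => (ha α X γ).trans (hcoiso X hX α hα γ hγ)
    rw [hDbr]
    refine ⟨sub_mem (add_mem (h.lie_mem hX hY) (a_mem hβ hX)) (a_mem hα hY),
      (mem_annihilator_iff _).2 fun Z hZ => ?_⟩
    simp [hcoiso Z hZ α hα β hβ, (mem_annihilator_iff α).1 hα _ (h.lie_mem hY hZ),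
      (mem_annihilator_iff β).1 hβ _ (h.lie_mem hX hZ)]
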